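/- Let M be an FSM over input alphabet X and output alphabet Y, let ∼ be a reflexive similarity relation on Y, and let s₁, s₂ be distinct states of M. Suppose x̄ = σ·τ is a shortest input sequence witnessing that s₁ and s₂ are strongly separable, where σ and τ are both nonempty. Then δ(s₁, σ) ≠ δ(s₂, σ), and τ is a shortest input sequence witnessing that δ(s₁, σ) and δ(s₂, σ) are strongly separable. -/
import Mathlib


/-- A (deterministic, completely-specified) FSM over input alphabet `X` and
output alphabet `Y`, with state type `S`: an initial state, a total transition
function and a total output function. -/
structure FSM (X Y S : Type) where
  init : S
  tr : S → X → S
  out : S → X → Y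

namespace FSM

variable {X Y S : Type}

/-- The transition function extended to input sequences. -/
def trs (M : FSM X Y S) : S → List X → S
  | s, [] => s
  | s, x :: xs => M.trs (M.tr s x) xs

/-- The output function extended to input sequences. -/
def outs (M : FSM X Y S) : S → List X → List Y
  | _, [] => []
  | s, x :: xs => M.out s x :: M.outs (M.tr s x) xs

end FSM

/-- The input sequence `xs` separates state `s` of `M` from state `q` of `M'`
(w.r.t. the similarity relation `sim`, lifted componentwise to sequences). -/
def Separates {X Y S S' : Type} (sim : Y → Y → Prop) (M : FSM X Y S) (M' : FSM X Y S')
    (s : S) (q : S') (xs : List X) : Prop :=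
  ¬ List.Forall₂ sim (M.outs s xs) (M'.outs q xs)

/-- `xs` is a witness that states `s₁`, `s₂` of `M` are strongly separable:
every state `s₃` of every FSM `M'` over the same alphabets is separated by `xs`
from `s₁` or from `s₂`. -/
def StrongWitness {X Y S : Type} (sim : Y → Y → Prop) (M : FSM X Y S)
    (s₁ s₂ : S) (xs : List X) : Prop :=
  ∀ (S' : Type) [Fintype S'] (M' : FSM X Y S') (s₃ : S'),
    Separates sim M M' s₁ s₃ xs ∨ Separates sim M M' s₂ s₃ xs

/-- `MI` conforms to `M`: on every input sequence the outputs are similar. -/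
def Conforms {X Y S Q : Type} (sim : Y → Y → Prop) (MI : FSM X Y Q) (M : FSM X Y S) : Prop :=
  ∀ xs : List X, List.Forall₂ sim (M.outs M.init xs) (MI.outs MI.init xs)

/-- A state cover: a prefix-closed set of input sequences containing, for each
state, exactly one sequence reaching it from the initial state. -/
def StateCover {X Y S : Type} (M : FSM X Y S) (V : Set (List X)) : Prop :=
  (∀ v ∈ V, ∀ u, u <+: v → u ∈ V) ∧
  ∀ s : S, ∃! v, v ∈ V ∧ M.trs M.init v = s

open Classical in
/-- One step of the product machine `P(M, MI)`; `none` is the error state `e`. -/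
noncomputable def prodStep {X Y S Q : Type} (sim : Y → Y → Prop) (M : FSM X Y S)
    (MI : FSM X Y Q) : Option (S × Q) → X → Option (S × Q)
  | none, _ => none
  | some (s, q), x =>
      if sim (M.out s x) (MI.out q x) then some (M.tr s x, MI.tr q x) else none

/-- The transition function of the product machine extended to input sequences. -/
noncomputable def prodTrs {X Y S Q : Type} (sim : Y → Y → Prop) (M : FSM X Y S)
    (MI : FSM X Y Q) : Option (S × Q) → List X → Option (S × Q)
  | p, [] => p
  | p, x :: xs => prodTrs sim M MI (prodStep sim M MI p x) xs

/-- The set `D_ℓ` of pairs `(v, x̄)` with `v ∈ V`, `|x̄| = ℓ`, and `M ≉_{v·x̄} M_I`. -/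
def DSet {X Y S Q : Type} (sim : Y → Y → Prop) (M : FSM X Y S) (MI : FSM X Y Q)
    (V : Set (List X)) (ℓ : ℕ) : Set (List X × List X) :=
  {p | p.1 ∈ V ∧ p.2.length = ℓ ∧
    ¬ List.Forall₂ sim (M.outs M.init (p.1 ++ p.2)) (MI.outs MI.init (p.1 ++ p.2))}

/-- The set `DW_ℓ` of pairs `(v, x̄)` with `v ∈ V`, `|x̄| = ℓ`, and
`M ≉_{v·x̄·w} M_I` for some `w ∈ W(δ(s₀, v·x̄))`. -/
def DWSet {X Y S Q : Type} (sim : Y → Y → Prop) (M : FSM X Y S) (MI : FSM X Y Q)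
    (V : Set (List X)) (W : S → Set (List X)) (ℓ : ℕ) : Set (List X × List X) :=
  {p | p.1 ∈ V ∧ p.2.length = ℓ ∧
    ∃ w ∈ W (M.trs M.init (p.1 ++ p.2)),
      ¬ List.Forall₂ sim (M.outs M.init (p.1 ++ p.2 ++ w))
          (MI.outs MI.init (p.1 ++ p.2 ++ w))}

namespace FSM

theorem trs_append' {X Y S : Type} (M : FSM X Y S) (s : S) (a b : List X) :
    M.trs s (a ++ b) = M.trs (M.trs s a) b := by
  induction a generalizing s <;> simp [FSM.trs, *]

theorem outs_append' {X Y S : Type} (M : FSM X Y S) (s : S) (a b : List X) :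
    M.outs s (a ++ b) = M.outs s a ++ M.outs (M.trs s a) b := by
  induction a generalizing s <;> simp [FSM.outs, FSM.trs, *]

theorem outs_length' {X Y S : Type} (M : FSM X Y S) (s : S) (a : List X) :
    (M.outs s a).length = a.length := by
  induction a generalizing s <;> simp [FSM.outs, *]

end FSM

theorem forall₂_append_split {α β : Type*} {r : α → β → Prop} :
    ∀ {a : List α} {c : List β} (b : List α) (d : List β), a.length = c.length →
      List.Forall₂ r (a ++ b) (c ++ d) → List.Forall₂ r a c ∧ List.Forall₂ r b d
  | [], [], b, d, _, h => ⟨List.Forall₂.nil, h⟩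
  | x :: a, y :: c, b, d, hl, h => by
    rcases h with _ | ⟨hxy, h⟩
    obtain ⟨h1, h2⟩ := forall₂_append_split b d (by simpa using hl) h
    exact ⟨List.Forall₂.cons hxy h1, h2⟩

/-- The machine that mimics `MA` for a counted number of steps, then jumps to
state `b` of `MB` and behaves like `MB` forever after. -/
def splice {X Y A B : Type} (n : ℕ) (MA : FSM X Y A) (MB : FSM X Y B) (b : B) :
    FSM X Y (Fin n × A ⊕ B) where
  init := Sum.inr b
  tr := fun s x => match s with
    | .inl (i, q) =>
        if i.val = 0 then .inr b
        else .inl (⟨i.val - 1, lt_of_le_of_lt (Nat.sub_le _ _) i.isLt⟩, MA.tr q x)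
    | .inr s => .inr (MB.tr s x)
  out := fun s x => match s with
    | .inl (_, q) => MA.out q x
    | .inr s => MB.out s x

theorem splice_out_inl {X Y A B : Type} (n : ℕ) (MA : FSM X Y A) (MB : FSM X Y B)
    (b : B) (i : Fin n) (q : A) (x : X) :
    (splice n MA MB b).out (.inl (i, q)) x = MA.out q x := rfl

theorem splice_tr_inl {X Y A B : Type} (n : ℕ) (MA : FSM X Y A) (MB : FSM X Y B)
    (b : B) (i : Fin n) (q : A) (x : X) :
    (splice n MA MB b).tr (.inl (i, q)) x =
      if i.val = 0 then .inr b
      else .inl (⟨i.val - 1, lt_of_le_of_lt (Nat.sub_le _ _) i.isLt⟩, MA.tr q x) := rfl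

theorem splice_outs_inr {X Y A B : Type} (n : ℕ) (MA : FSM X Y A) (MB : FSM X Y B)
    (b : B) (s : B) (v : List X) :
    (splice n MA MB b).outs (.inr s) v = MB.outs s v := by
  induction v generalizing s with
  | nil => rfl
  | cons x xs ih =>
      show MB.out s x :: (splice n MA MB b).outs (.inr (MB.tr s x)) xs = _
      rw [ih]
      rfl

theorem splice_outs {X Y A B : Type} (n : ℕ) (MA : FSM X Y A) (MB : FSM X Y B) (b : B) :
    ∀ (u : List X) (i : Fin n) (q : A), u.length = i.val + 1 → ∀ v : List X,
      (splice n MA MB b).outs (.inl (i, q)) (u ++ v) = MA.outs q u ++ MB.outs b v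
  | [], i, q, h, v => by simp at h
  | x :: u, i, q, h, v => by
    have step : (splice n MA MB b).outs (.inl (i, q)) ((x :: u) ++ v)
        = MA.out q x ::
            (splice n MA MB b).outs ((splice n MA MB b).tr (.inl (i, q)) x) (u ++ v) := rfl
    rcases u with _ | ⟨x', u'⟩
    · have hi : i.val = 0 := by simpa using h.symm
      rw [step, splice_tr_inl, if_pos hi, splice_outs_inr]
      rfl
    · have hi : ¬ i.val = 0 := by simp at h; omega
      have hlen : (x' :: u').length =
          (⟨i.val - 1, lt_of_le_of_lt (Nat.sub_le _ _) i.isLt⟩ : Fin n).val + 1 := by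
        simp at h ⊢; omega
      rw [step, splice_tr_inl, if_neg hi,
        splice_outs n MA MB b (x' :: u') _ (MA.tr q x) hlen v]
      rfl

theorem not_strongWitness {X Y S : Type} {sim : Y → Y → Prop} {M : FSM X Y S}
    {s₁ s₂ : S} {xs : List X} (h : ¬ StrongWitness sim M s₁ s₂ xs) :
    ∃ (S' : Type) (_ : Fintype S') (M' : FSM X Y S') (s₃ : S'),
      List.Forall₂ sim (M.outs s₁ xs) (M'.outs s₃ xs) ∧
      List.Forall₂ sim (M.outs s₂ xs) (M'.outs s₃ xs) := by
  simp only [StrongWitness, Separates, not_forall, not_or, not_not] at h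
  exact h

/-- if `σ·τ` (with `σ`, `τ` nonempty) is a shortest witness that
the distinct states `s₁` and `s₂` are strongly separable, then
`δ(s₁, σ) ≠ δ(s₂, σ)` and `τ` is a shortest witness that `δ(s₁, σ)` and
`δ(s₂, σ)` are strongly separable. -/
theorem shortest_witness_decompose {X Y S : Type} [Fintype X] [Fintype S]
    (sim : Y → Y → Prop) (hrefl : ∀ y : Y, sim y y) (M : FSM X Y S)
    (s₁ s₂ : S) (hne : s₁ ≠ s₂) (σ τ : List X) (hσ : σ ≠ []) (hτ : τ ≠ [])
    (hwit : StrongWitness sim M s₁ s₂ (σ ++ τ))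
    (hmin : ∀ xs : List X, StrongWitness sim M s₁ s₂ xs → (σ ++ τ).length ≤ xs.length) :
    M.trs s₁ σ ≠ M.trs s₂ σ ∧
    StrongWitness sim M (M.trs s₁ σ) (M.trs s₂ σ) τ ∧
    (∀ xs : List X, StrongWitness sim M (M.trs s₁ σ) (M.trs s₂ σ) xs →
      τ.length ≤ xs.length) := by
  have hτpos : 0 < τ.length := List.length_pos_iff.2 hτ
  have hσpos : 0 < σ.length := List.length_pos_iff.2 hσ
  set n := σ.length with hn
  have hσlen : σ.length = (⟨n - 1, by omega⟩ : Fin n).val + 1 := by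
    simp only [Fin.val_mk]; omega
  -- σ is not itself a witness (it is too short)
  have hσnw : ¬ StrongWitness sim M s₁ s₂ σ := by
    intro h
    have := hmin σ h
    rw [List.length_append] at this
    omega
  obtain ⟨S'', inst'', M'', s₄, g1, g2⟩ := not_strongWitness hσnw
  haveI := inst''
  -- Part 1
  have part1 : M.trs s₁ σ ≠ M.trs s₂ σ := by
    intro heq
    have hout := splice_outs n M'' M (M.trs s₁ σ) σ ⟨n - 1, by omega⟩ s₄ hσlen τ
    have hrfl : List.Forall₂ sim (M.outs (M.trs s₁ σ) τ) (M.outs (M.trs s₁ σ) τ) :=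
      List.forall₂_same.2 fun x _ => hrefl x
    rcases hwit _ (splice n M'' M (M.trs s₁ σ)) (.inl (⟨n - 1, by omega⟩, s₄)) with h | h
    · exact h (by rw [hout, M.outs_append']; exact List.rel_append g1 hrfl)
    · exact h (by rw [hout, M.outs_append', ← heq]; exact List.rel_append g2 hrfl)
  refine ⟨part1, ?_, ?_⟩
  · -- Part 2: τ is a witness for the successor states
    intro S' instS' M' s₃
    by_contra hcon
    simp only [Separates, not_or, not_not] at hcon
    obtain ⟨h1, h2⟩ := hcon
    haveI := instS'
    have hout := splice_outs n M'' M' s₃ σ ⟨n - 1, by omega⟩ s₄ hσlen τ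
    rcases hwit _ (splice n M'' M' s₃) (.inl (⟨n - 1, by omega⟩, s₄)) with h | h
    · exact h (by rw [hout, M.outs_append']; exact List.rel_append g1 h1)
    · exact h (by rw [hout, M.outs_append']; exact List.rel_append g2 h2)
  · -- Part 3: minimality
    intro xs hxs
    by_contra hlt
    push_neg at hlt
    have hwit' : StrongWitness sim M s₁ s₂ (σ ++ xs) := by
      intro S' instS' M' s₃
      by_contra hcon
      simp only [Separates, not_or, not_not] at hcon
      obtain ⟨h1, h2⟩ := hcon
      rw [M.outs_append'] at h1 h2
      rw [M'.outs_append'] at h1 h2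
      have e1 := forall₂_append_split _ _ (by simp [FSM.outs_length']) h1
      have e2 := forall₂_append_split _ _ (by simp [FSM.outs_length']) h2
      rcases hxs S' M' (M'.trs s₃ σ) with h | h
      · exact h e1.2
      · exact h e2.2
    have := hmin _ hwit'
    rw [List.length_append, List.length_append] at this
    omega
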